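/- Let (X,Y) be jointly distributed random variables on finite sets, let α := min_{x ∈ supp(X)} Pr[X=x] > 0, and let d* := max_{x ∈ supp(X)} Δ(P_{Y|X=x}, P_Y), where P_{Y|X=x} is the conditional law of Y given X = x, P_Y is the marginal law of Y, and Δ denotes total variation distance. If d* = 0 then I(X;Y) = 0; otherwise I(X;Y) ≤ max{1, 2 + 2·log₂(d*) − log₂(α)}, where the mutual information I(X;Y) is measured in bits. -/

import Mathlib

/-- Mutual information (in bits) of a joint pmf `q` on a product of finite sets. -/
noncomputable def mutualInfo {γ β : Type*} [Fintype γ] [Fintype β] (q : γ → β → ℝ) : ℝ :=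
  ∑ v, ∑ b,
    if q v b = 0 then 0 else
      q v b * Real.logb 2 (q v b / ((∑ b', q v b') * (∑ v', q v' b)))

open Real Finset

lemma aux_log_le (s : ℝ) (hs : 1 ≤ s) : Real.log s ≤ (s^2 - 1) / (2*s) := by
  have hs0 : (0:ℝ) < s := lt_of_lt_of_le one_pos hs
  set f : ℝ → ℝ := fun x => (x^2 - 1)/(2*x) - Real.log x with hf
  have key : MonotoneOn f (Set.Ici 1) := by
    have hder : ∀ x ∈ interior (Set.Ici (1:ℝ)), 0 ≤ deriv f x := by
      intro x hx
      rw [interior_Ici] at hx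
      have hx0 : (0:ℝ) < x := lt_trans one_pos hx
      have h1 : HasDerivAt (fun x : ℝ => (x^2 - 1)/(2*x))
          ((2*x*(2*x) - (x^2-1)*2)/(2*x)^2) x := by
        have hnum : HasDerivAt (fun x : ℝ => x^2 - 1) (2*x) x := by
          simpa using ((hasDerivAt_pow 2 x).sub_const 1)
        have hden : HasDerivAt (fun x : ℝ => 2*x) 2 x := by
          simpa using (hasDerivAt_id x).const_mul 2
        exact hnum.div hden (by positivity)
      have h2 : HasDerivAt f ((2*x*(2*x) - (x^2-1)*2)/(2*x)^2 - x⁻¹) x :=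
        h1.sub (Real.hasDerivAt_log hx0.ne')
      rw [h2.deriv]
      have : (2*x*(2*x) - (x^2-1)*2)/(2*x)^2 - x⁻¹ = (x-1)^2/(2*x^2) := by
        field_simp
        ring
      rw [this]
      positivity
    apply monotoneOn_of_deriv_nonneg (convex_Ici 1) _ _ hder
    · apply ContinuousOn.sub
      · apply ContinuousOn.div
        · fun_prop
        · fun_prop
        · intro x hx; have : (0:ℝ) < x := lt_of_lt_of_le one_pos hx; positivity
      · apply ContinuousOn.log continuousOn_id
        intro x hx; have : (0:ℝ) < x := lt_of_lt_of_le one_pos hx; exact this.ne'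
    · intro x hx
      rw [interior_Ici] at hx
      have hx0 : (0:ℝ) < x := lt_trans one_pos hx
      apply DifferentiableAt.differentiableWithinAt
      apply DifferentiableAt.sub
      · apply DifferentiableAt.div (by fun_prop) (by fun_prop) (by positivity)
      · exact Real.differentiableAt_log hx0.ne'
  have h0 : f 1 ≤ f s := key (by simp) hs hs
  simp only [hf] at h0
  norm_num at h0
  linarith

lemma aux_keyK (L : ℝ) (hL : 1 ≤ L) : (2:ℝ)^(-(L+1)/2) * L ≤ 1 - (2:ℝ)^(-L) := by
  set s : ℝ := (2:ℝ)^((L-1)/2) with hsdef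
  have hs1 : (1:ℝ) ≤ s := Real.one_le_rpow one_le_two (by linarith)
  have hs0 : (0:ℝ) < s := lt_of_lt_of_le one_pos hs1
  have hL2 : (2:ℝ)/3 ≤ Real.log 2 := by
    have := Real.log_two_gt_d9
    linarith
  have hlogs : Real.log s = (L-1)/2 * Real.log 2 := Real.log_rpow two_pos _
  have h2s : (2:ℝ)^((L+1)/2) = 2*s := by
    rw [show (L+1)/2 = 1 + (L-1)/2 by ring, Real.rpow_add two_pos, Real.rpow_one, hsdef]
  have h2L : (2:ℝ)^(L:ℝ) = 2*s^2 := by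
    rw [show (L:ℝ) = 1 + ((L-1)/2 + (L-1)/2) by ring, Real.rpow_add two_pos,
      Real.rpow_one, Real.rpow_add two_pos, ← hsdef]
    ring
  have hA : (2:ℝ)^(-(L+1)/2) = (2*s)⁻¹ := by
    rw [show -(L+1)/2 = -((L+1)/2) by ring, Real.rpow_neg (by norm_num), h2s]
  have hB : (2:ℝ)^(-L) = (2*s^2)⁻¹ := by
    rw [Real.rpow_neg (by norm_num), h2L]
  have hkey : s * L ≤ 2*s^2 - 1 := by
    have h1 : (L-1) * Real.log 2 = 2 * Real.log s := by rw [hlogs]; ring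
    have h2 : 2 * Real.log s ≤ (s^2-1)/s := by
      have h := aux_log_le s hs1
      calc 2*Real.log s ≤ 2*((s^2-1)/(2*s)) := by linarith
      _ = (s^2-1)/s := by field_simp
    have h3 : (L-1)*(2/3) ≤ (L-1)*Real.log 2 :=
      mul_le_mul_of_nonneg_left hL2 (by linarith)
    have h4 : L - 1 ≤ (3/2)*((s^2-1)/s) := by linarith
    have h5 : s*(L-1) ≤ s*((3/2)*((s^2-1)/s)) := mul_le_mul_of_nonneg_left h4 hs0.le
    have h6 : s*((3/2)*((s^2-1)/s)) = (3/2)*(s^2-1) := by field_simp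
    nlinarith [sq_nonneg (s-1)]
  rw [hA, hB, ← sub_nonneg]
  have heq : 1 - (2*s^2)⁻¹ - (2*s)⁻¹ * L = (2*s^2 - 1 - s*L)/(2*s^2) := by
    field_simp
  rw [heq]
  apply div_nonneg (by linarith) (by positivity)

lemma aux_ratio_log (a r : ℝ) (ha : 0 < a) (har : a ≤ r) (hr1 : r ≤ 1) :
    (1-a) * (-Real.log r) ≤ (1-r) * (-Real.log a) := by
  have hr0 : 0 < r := lt_of_lt_of_le ha har
  rcases eq_or_lt_of_le har with h | harlt
  · subst h; nlinarith [Real.log_nonpos (by linarith) hr1]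
  rcases eq_or_lt_of_le hr1 with h | hr1'
  · subst h
    simp only [Real.log_one, neg_zero, mul_zero, sub_self, zero_mul, le_refl]
  · have ha1 : a < 1 := lt_trans harlt hr1'
    set l : ℝ := (r - a)/(1 - a) with hl
    have h1a : (0:ℝ) < 1 - a := by linarith
    have hl0 : 0 < l := div_pos (by linarith) h1a
    have hl1 : l < 1 := by rw [hl, div_lt_one h1a]; linarith
    have hcomb : (1-l) • a + l • (1:ℝ) = r := by
      simp only [smul_eq_mul, hl]; field_simp; ring
    have hconc := (strictConcaveOn_log_Ioi.concaveOn).2 (Set.mem_Ioi.2 ha)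
      (Set.mem_Ioi.2 one_pos) (by linarith : (0:ℝ) ≤ 1 - l) hl0.le (by ring)
    rw [hcomb, Real.log_one] at hconc
    have h2 : (1-l) * Real.log a ≤ Real.log r := by
      simpa using hconc
    have h3 : (1 - l) = (1-r)/(1-a) := by rw [hl]; field_simp; ring
    rw [h3] at h2
    have h4 := mul_le_mul_of_nonneg_left h2 h1a.le
    have h5 : (1-a)*((1-r)/(1-a) * Real.log a) = (1-r) * Real.log a := by
      field_simp
    nlinarith [h4, h5]

lemma aux_final (a d I : ℝ) (ha : 0 < a) (ha2 : a ≤ 1/2) (hd : 0 < d) (hd1 : d ≤ 1)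
    (h1 : I ≤ -Real.logb 2 a) (h2 : I ≤ d * (-Real.logb 2 a) / (1 - a)) :
    I ≤ max 1 (2 + 2 * Real.logb 2 d - Real.logb 2 a) := by
  set L : ℝ := -Real.logb 2 a with hLdef
  set t : ℝ := -Real.logb 2 d with htdef
  have hb1 : (1:ℝ) < 2 := one_lt_two
  have hL1 : 1 ≤ L := by
    rw [hLdef, le_neg]
    calc Real.logb 2 a ≤ Real.logb 2 (1/2) := Real.logb_le_logb_of_le one_lt_two ha ha2
    _ = -1 := by
        rw [show (1:ℝ)/2 = (2:ℝ)⁻¹ by norm_num, Real.logb_inv, Real.logb_self_eq_one one_lt_two]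
  have ht0 : 0 ≤ t := by
    rw [htdef, le_neg, neg_zero]
    exact Real.logb_nonpos one_lt_two hd.le hd1
  have hda : d = (2:ℝ)^(-t) := by
    rw [htdef, neg_neg, Real.rpow_logb two_pos (by norm_num) hd]
  have haa : a = (2:ℝ)^(-L) := by
    rw [hLdef, neg_neg, Real.rpow_logb two_pos (by norm_num) ha]
  have hrhs : 2 + 2 * Real.logb 2 d - Real.logb 2 a = L + 2 - 2*t := by
    rw [hLdef, htdef]; ring
  rw [hrhs]
  have h1a : (0:ℝ) < 1 - a := by linarith
  by_cases hT : t ≤ 1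
  · -- d ≥ 1/2 case
    apply le_max_of_le_right
    linarith
  · push_neg at hT
    set T : ℝ := (L+1)/2 with hTdef
    have hKey : (2:ℝ)^(-T) * L ≤ 1 - a := by
      rw [haa, hTdef, show -((L+1)/2) = -(L+1)/2 by ring]
      exact aux_keyK L hL1
    by_cases htT : T ≤ t
    · -- small d: show I ≤ 1
      apply le_max_of_le_left
      have hdle : d ≤ (2:ℝ)^(-T) := by
        rw [hda]
        exact Real.rpow_le_rpow_of_exponent_le one_le_two (by linarith)
      have : d * L / (1-a) ≤ 1 := by
        rw [div_le_one h1a]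
        calc d * L ≤ (2:ℝ)^(-T) * L := by
              apply mul_le_mul_of_nonneg_right hdle (by linarith)
        _ ≤ 1 - a := hKey
      linarith
    · push_neg at htT
      apply le_max_of_le_right
      -- 1 < t < T, convexity of 2^{-·}
      have hT1 : 1 < T := lt_trans hT htT
      set l : ℝ := (t - 1)/(T - 1) with hldef
      have hT1' : (0:ℝ) < T - 1 := by linarith
      have hl0 : 0 < l := div_pos (by linarith) hT1'
      have hl1 : l < 1 := by rw [hldef, div_lt_one hT1']; linarith
      have hteq : t = (1-l)*1 + l*T := by rw [hldef]; field_simp; ring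
      have hconv : (2:ℝ)^(-t) ≤ (1-l) * (2:ℝ)^(-(1:ℝ)) + l * (2:ℝ)^(-T) := by
        have e : ∀ x : ℝ, (2:ℝ)^(-x) = Real.exp ((-x) * Real.log 2) := by
          intro x
          rw [Real.rpow_def_of_pos two_pos, mul_comm]
        rw [e t, e 1, e T]
        have := convexOn_exp.2 (Set.mem_univ (-(1:ℝ) * Real.log 2))
          (Set.mem_univ (-T * Real.log 2)) (by linarith : (0:ℝ) ≤ 1 - l) hl0.le
          (by ring : (1-l) + l = 1)
        simp only [smul_eq_mul] at this
        calc Real.exp (-t * Real.log 2)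
            = Real.exp ((1-l) * (-1 * Real.log 2) + l * (-T * Real.log 2)) := by
              congr 1
              rw [hteq]; ring
        _ ≤ (1-l) * Real.exp (-1 * Real.log 2) + l * Real.exp (-T * Real.log 2) := this
      have hL0 : (0:ℝ) ≤ L := by linarith
      have hbound : d * L / (1-a) ≤ (1-l) * L + l * 1 := by
        rw [div_le_iff₀ h1a, hda]
        have step1 : (2:ℝ)^(-t) * L ≤ ((1-l) * (2:ℝ)^(-(1:ℝ)) + l * (2:ℝ)^(-T)) * L :=
          mul_le_mul_of_nonneg_right hconv hL0
        have step2 : ((1-l) * (2:ℝ)^(-(1:ℝ)) + l * (2:ℝ)^(-T)) * L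
            = (1-l) * ((2:ℝ)^(-(1:ℝ)) * L) + l * ((2:ℝ)^(-T) * L) := by ring
        have e1 : (2:ℝ)^(-(1:ℝ)) = 1/2 := by
          rw [Real.rpow_neg_one]; norm_num
        have s3 : (1-l) * ((2:ℝ)^(-(1:ℝ)) * L) ≤ (1-l) * (L * (1-a)) := by
          apply mul_le_mul_of_nonneg_left _ (by linarith)
          rw [e1]
          nlinarith
        have s4 : l * ((2:ℝ)^(-T) * L) ≤ l * (1 * (1-a)) := by
          apply mul_le_mul_of_nonneg_left _ hl0.le
          nlinarith
        calc (2:ℝ)^(-t) * L ≤ (1-l) * ((2:ℝ)^(-(1:ℝ)) * L) + l * ((2:ℝ)^(-T) * L) := by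
              rw [← step2]; exact step1
        _ ≤ (1-l) * (L * (1-a)) + l * (1 * (1-a)) := add_le_add s3 s4
        _ = ((1-l) * L + l * 1) * (1-a) := by ring
      have hlT : l * (T-1) = t - 1 := by rw [hldef]; field_simp
      have hT2 : L - 1 = 2*(T-1) := by rw [hTdef]; ring
      have hfin : (1-l) * L + l * 1 = L + 2 - 2*t := by
        linear_combination (-2)*hlT + (-l)*hT2
      exact (h2.trans hbound).trans_eq hfin

lemma lemA {α β : Type*} [Fintype α] [Fintype β]
    (p : α → β → ℝ) (hp0 : ∀ x y, 0 ≤ p x y) (hp1 : ∑ x, ∑ y, p x y = 1)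
    (am : ℝ) (ha0 : 0 < am)
    (h_le : ∀ x, (∑ y, p x y) ≠ 0 → am ≤ ∑ y, p x y) :
    mutualInfo p ≤ -Real.logb 2 am := by
  have key : ∀ x y, (if p x y = 0 then (0:ℝ) else
      p x y * Real.logb 2 (p x y / ((∑ b', p x b') * (∑ v', p v' y))))
      ≤ p x y * (-Real.logb 2 am) := by
    intro x y
    by_cases h : p x y = 0
    · simp [h]
    · rw [if_neg h]
      have hpxy : 0 < p x y := lt_of_le_of_ne (hp0 x y) (Ne.symm h)
      have hPx : p x y ≤ ∑ b', p x b' :=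
        Finset.single_le_sum (fun i _ => hp0 x i) (mem_univ y)
      have hPy : p x y ≤ ∑ v', p v' y :=
        Finset.single_le_sum (fun i _ => hp0 i y) (mem_univ x)
      have hPx0 : 0 < ∑ b', p x b' := lt_of_lt_of_le hpxy hPx
      have hPy0 : 0 < ∑ v', p v' y := lt_of_lt_of_le hpxy hPy
      have ham : am ≤ ∑ b', p x b' := h_le x hPx0.ne'
      have hratio : p x y / ((∑ b', p x b') * (∑ v', p v' y)) ≤ am⁻¹ := by
        rw [div_le_iff₀ (by positivity), inv_mul_eq_div, le_div_iff₀ ha0]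
        calc p x y * am ≤ (∑ v', p v' y) * (∑ b', p x b') :=
          mul_le_mul hPy ham ha0.le hPy0.le
        _ = (∑ b', p x b') * (∑ v', p v' y) := by ring
      have hlog : Real.logb 2 (p x y / ((∑ b', p x b') * (∑ v', p v' y)))
          ≤ -Real.logb 2 am := by
        rw [← Real.logb_inv]
        exact Real.logb_le_logb_of_le one_lt_two (by positivity) hratio
      exact mul_le_mul_of_nonneg_left hlog hpxy.le
  calc mutualInfo p ≤ ∑ x, ∑ y, p x y * (-Real.logb 2 am) :=
        Finset.sum_le_sum (fun x _ => Finset.sum_le_sum (fun y _ => key x y))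
  _ = (∑ x, ∑ y, p x y) * (-Real.logb 2 am) := by
        simp_rw [← Finset.sum_mul]
  _ = -Real.logb 2 am := by rw [hp1, one_mul]

lemma lemB {α β : Type*} [Fintype α] [Fintype β]
    (p : α → β → ℝ) (hp0 : ∀ x y, 0 ≤ p x y) (hp1 : ∑ x, ∑ y, p x y = 1)
    (am d : ℝ) (ha0 : 0 < am) (ha1 : am < 1)
    (h_le : ∀ x, (∑ y, p x y) ≠ 0 → am ≤ ∑ y, p x y)
    (hd : ∀ x, (∑ y, p x y) ≠ 0 →
      (1/2) * ∑ y, |p x y / (∑ y', p x y') - ∑ x', p x' y| ≤ d) :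
    mutualInfo p ≤ d * (-Real.logb 2 am) / (1 - am) := by
  have hlog2 : (0:ℝ) < Real.log 2 := Real.log_pos one_lt_two
  have h1am : (0:ℝ) < 1 - am := by linarith
  set L : ℝ := -Real.logb 2 am with hLdef
  have hL0 : 0 ≤ L := by
    rw [hLdef, le_neg, neg_zero]
    exact Real.logb_nonpos one_lt_two ha0.le ha1.le
  set G : ℝ := L / (1 - am) with hGdef
  have hG0 : 0 ≤ G := div_nonneg hL0 h1am.le
  -- per-x bound
  have perx : ∀ x, (∑ y, if p x y = 0 then (0:ℝ) else
      p x y * Real.logb 2 (p x y / ((∑ b', p x b') * (∑ v', p v' y))))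
      ≤ G * ((∑ y', p x y') * d) := by
    intro x
    by_cases hPx : (∑ y', p x y') = 0
    · have hz : ∀ y, p x y = 0 := fun y =>
        (Finset.sum_eq_zero_iff_of_nonneg (fun i _ => hp0 x i)).1 hPx y (mem_univ y)
      rw [hPx]
      simp [hz]
    · have hPx0 : 0 < ∑ y', p x y' :=
        lt_of_le_of_ne (Finset.sum_nonneg (fun i _ => hp0 x i)) (Ne.symm hPx)
      set Px : ℝ := ∑ y', p x y' with hPxdef
      -- termwise
      have term : ∀ y, (if p x y = 0 then (0:ℝ) else
          p x y * Real.logb 2 (p x y / (Px * (∑ v', p v' y))))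
          ≤ G * (Px * max (p x y / Px - ∑ v', p v' y) 0) := by
        intro y
        by_cases h : p x y = 0
        · rw [if_pos h]
          have : (0:ℝ) ≤ max (p x y / Px - ∑ v', p v' y) 0 := le_max_right _ _
          positivity
        · rw [if_neg h]
          have hpxy : 0 < p x y := lt_of_le_of_ne (hp0 x y) (Ne.symm h)
          set Q : ℝ := ∑ v', p v' y with hQdef
          have hpQ : p x y ≤ Q := Finset.single_le_sum (fun i _ => hp0 i y) (mem_univ x)
          have hQ0 : 0 < Q := lt_of_lt_of_le hpxy hpQ
          set P : ℝ := p x y / Px with hPdef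
          have hP0 : 0 < P := div_pos hpxy hPx0
          have hPPx : P * Px = p x y := div_mul_cancel₀ _ hPx0.ne'
          have hsplit : p x y / (Px * Q) = P / Q := by
            rw [hPdef, div_div]
          rw [hsplit]
          by_cases hPQ : P ≤ Q
          · have h1 : Real.logb 2 (P/Q) ≤ 0 :=
              Real.logb_nonpos one_lt_two (by positivity) ((div_le_one hQ0).2 hPQ)
            have h2 : p x y * Real.logb 2 (P/Q) ≤ 0 :=
              mul_nonpos_of_nonneg_of_nonpos hpxy.le h1
            have h3 : (0:ℝ) ≤ max (P - Q) 0 := le_max_right _ _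
            calc p x y * Real.logb 2 (P/Q) ≤ 0 := h2
            _ ≤ G * (Px * max (P - Q) 0) := by positivity
          · push_neg at hPQ
            have hmax : max (P - Q) 0 = P - Q := max_eq_left (by linarith)
            rw [hmax]
            set r : ℝ := Q / P with hrdef
            have hr1 : r < 1 := (div_lt_one hP0).2 hPQ
            have hamr : am ≤ r := by
              rw [hrdef, le_div_iff₀ hP0]
              have hamPx : am ≤ Px := h_le x hPx
              calc am * P ≤ Px * P := mul_le_mul_of_nonneg_right hamPx hP0.le
              _ = p x y := by rw [mul_comm]; exact hPPx
              _ ≤ Q := hpQ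
            have hrl := aux_ratio_log am r ha0 hamr hr1.le
            set A : ℝ := -Real.log r with hAdef
            set B : ℝ := -Real.log am with hBdef
            have hA0 : 0 ≤ A := by
              rw [hAdef, le_neg, neg_zero]
              exact Real.log_nonpos (by positivity) hr1.le
            have hB0 : 0 ≤ B := by
              rw [hBdef, le_neg, neg_zero]
              exact Real.log_nonpos ha0.le ha1.le
            have hlogPQ : Real.logb 2 (P/Q) = A / Real.log 2 := by
              rw [hAdef, Real.logb, show P/Q = r⁻¹ by rw [hrdef, inv_div],
                Real.log_inv, neg_div]
            have hLB : L = B / Real.log 2 := by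
              rw [hLdef, hBdef, Real.logb, neg_div]
            have hPr : P - Q = P * (1 - r) := by
              rw [hrdef]
              field_simp
            -- core inequality
            have hcore : A ≤ (1 - r) * B / (1 - am) := by
              rw [le_div_iff₀ h1am]
              nlinarith [hrl]
            have h5 : p x y * (A / Real.log 2) ≤
                p x y * ((1-r) * B / (1-am) / Real.log 2) := by
              apply mul_le_mul_of_nonneg_left _ hpxy.le
              exact div_le_div_of_nonneg_right hcore hlog2.le |>.trans_eq rfl
            have h6 : p x y * ((1-r) * B / (1-am) / Real.log 2)
                = G * (Px * (P - Q)) := by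
              rw [hGdef, hLB, hPr, ← hPPx]
              ring
            rw [hlogPQ]
            calc p x y * (A / Real.log 2) ≤ _ := h5
            _ = G * (Px * (P - Q)) := h6
      -- sum over y
      have hsum : (∑ y, if p x y = 0 then (0:ℝ) else
          p x y * Real.logb 2 (p x y / (Px * (∑ v', p v' y))))
          ≤ ∑ y, G * (Px * max (p x y / Px - ∑ v', p v' y) 0) :=
        Finset.sum_le_sum (fun y _ => term y)
      have hmaxsum : ∑ y, max (p x y / Px - ∑ v', p v' y) 0
          = (1/2) * ∑ y, |p x y / Px - ∑ v', p v' y| := by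
        have hid : ∀ y, max (p x y / Px - ∑ v', p v' y) 0
            = ((p x y / Px - ∑ v', p v' y) + |p x y / Px - ∑ v', p v' y|)/2 := by
          intro y
          rcases le_total 0 (p x y / Px - ∑ v', p v' y) with h | h
          · rw [max_eq_left h, abs_of_nonneg h]; ring
          · rw [max_eq_right h, abs_of_nonpos h]; ring
        have hPys : ∑ y, (∑ v', p v' y) = (1:ℝ) := by rw [Finset.sum_comm]; exact hp1
        have hPxs : ∑ y, p x y / Px = (1:ℝ) := by
          rw [← Finset.sum_div, ← hPxdef]
          exact div_self hPx
        have hzero : ∑ y, (p x y / Px - ∑ v', p v' y) = 0 := by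
          rw [Finset.sum_sub_distrib, hPxs, hPys]; ring
        rw [Finset.sum_congr rfl (fun y _ => hid y), ← Finset.sum_div,
          Finset.sum_add_distrib, hzero, zero_add]
        ring
      have habs : Px * ((1/2) * ∑ y, |p x y / Px - ∑ v', p v' y|) ≤ Px * d :=
        mul_le_mul_of_nonneg_left (hd x hPx) hPx0.le
      calc (∑ y, if p x y = 0 then (0:ℝ) else
          p x y * Real.logb 2 (p x y / (Px * (∑ v', p v' y))))
          ≤ ∑ y, G * (Px * max (p x y / Px - ∑ v', p v' y) 0) := hsum
      _ = G * (Px * ∑ y, max (p x y / Px - ∑ v', p v' y) 0) := by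
          simp_rw [← Finset.mul_sum]
      _ = G * (Px * ((1/2) * ∑ y, |p x y / Px - ∑ v', p v' y|)) := by rw [hmaxsum]
      _ ≤ G * (Px * d) := mul_le_mul_of_nonneg_left habs hG0
  calc mutualInfo p ≤ ∑ x, G * ((∑ y', p x y') * d) :=
        Finset.sum_le_sum (fun x _ => perx x)
  _ = G * ((∑ x, ∑ y', p x y') * d) := by
        simp_rw [← Finset.mul_sum, ← Finset.sum_mul]
  _ = d * L / (1 - am) := by rw [hp1, hGdef]; ring

/-- Let `(X,Y)` be jointly distributed on finite sets with joint
pmf `p`, `αmin := min_{x ∈ supp X} Pr[X = x] > 0` and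
`dstar := max_{x ∈ supp X} Δ(P_{Y|X=x}, P_Y)`. If `dstar = 0` then `I(X;Y) = 0`;
otherwise `I(X;Y) ≤ max{1, 2 + 2·log₂(dstar) − log₂(αmin)}` (bits). -/
theorem stmt_12 {α β : Type*} [Fintype α] [Fintype β]
    (p : α → β → ℝ) (hp0 : ∀ x y, 0 ≤ p x y) (hp1 : ∑ x, ∑ y, p x y = 1)
    (αmin dstar : ℝ)
    (hαmin : IsLeast {r : ℝ | ∃ x, (∑ y, p x y) ≠ 0 ∧ r = ∑ y, p x y} αmin)
    (hα0 : 0 < αmin)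
    (hdstar : IsGreatest {r : ℝ | ∃ x, (∑ y, p x y) ≠ 0 ∧
        r = (1 / 2) * ∑ y, |p x y / (∑ y', p x y') - ∑ x', p x' y|} dstar) :
    (dstar = 0 → mutualInfo p = 0) ∧
    (dstar ≠ 0 →
      mutualInfo p ≤ max 1 (2 + 2 * Real.logb 2 dstar - Real.logb 2 αmin)) := by
  classical
  have h_le : ∀ x, (∑ y, p x y) ≠ 0 → αmin ≤ ∑ y, p x y :=
    fun x hx => hαmin.2 ⟨x, hx, rfl⟩
  have hd_ub : ∀ x, (∑ y, p x y) ≠ 0 →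
      (1/2) * ∑ y, |p x y / (∑ y', p x y') - ∑ x', p x' y| ≤ dstar :=
    fun x hx => hdstar.2 ⟨x, hx, rfl⟩
  constructor
  · -- dstar = 0 implies zero mutual information
    intro hd0
    apply Finset.sum_eq_zero
    intro x _
    apply Finset.sum_eq_zero
    intro y _
    by_cases h : p x y = 0
    · rw [if_pos h]
    · rw [if_neg h]
      have hpxy : 0 < p x y := lt_of_le_of_ne (hp0 x y) (Ne.symm h)
      have hPx : p x y ≤ ∑ b', p x b' :=
        Finset.single_le_sum (fun i _ => hp0 x i) (mem_univ y)
      have hPx0 : 0 < ∑ b', p x b' := lt_of_lt_of_le hpxy hPx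
      have hmem := hd_ub x hPx0.ne'
      rw [hd0] at hmem
      have habs : ∀ z ∈ Finset.univ,
          (0:ℝ) ≤ |p x z / (∑ y', p x y') - ∑ x', p x' z| := fun z _ => abs_nonneg _
      have hsum0 : ∑ z, |p x z / (∑ y', p x y') - ∑ x', p x' z| = 0 := by
        have h1 : (0:ℝ) ≤ ∑ z, |p x z / (∑ y', p x y') - ∑ x', p x' z| :=
          Finset.sum_nonneg habs
        linarith
      have hzero := (Finset.sum_eq_zero_iff_of_nonneg habs).1 hsum0 y (mem_univ y)
      have heq : (∑ x', p x' y) = p x y / (∑ y', p x y') := by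
        have := abs_eq_zero.1 hzero
        linarith
      have h9 : (∑ b', p x b') * (∑ v', p v' y) = p x y := by
        rw [heq, mul_comm, div_mul_cancel₀ _ hPx0.ne']
      have hval : p x y / ((∑ b', p x b') * (∑ v', p v' y)) = 1 := by
        rw [h9, div_self h]
      rw [hval, Real.logb_one, mul_zero]
  · -- main bound
    intro hdne
    obtain ⟨x0, hx0, hx0d⟩ := hdstar.1
    have hPx00 : 0 < ∑ y, p x0 y :=
      lt_of_le_of_ne (Finset.sum_nonneg (fun y _ => hp0 x0 y)) (Ne.symm hx0)
    have hd_nonneg : 0 ≤ dstar := by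
      rw [hx0d]
      apply mul_nonneg (by norm_num)
      exact Finset.sum_nonneg fun y _ => abs_nonneg _
    have hdpos : 0 < dstar := lt_of_le_of_ne hd_nonneg (Ne.symm hdne)
    have hPys : ∑ y, (∑ x', p x' y) = (1:ℝ) := by rw [Finset.sum_comm]; exact hp1
    -- dstar ≤ 1
    have hd1 : dstar ≤ 1 := by
      rw [hx0d]
      have hb : ∀ y ∈ Finset.univ, |p x0 y / (∑ y', p x0 y') - ∑ x', p x' y|
          ≤ p x0 y / (∑ y', p x0 y') + ∑ x', p x' y := by
        intro y _
        have h1 : 0 ≤ p x0 y / (∑ y', p x0 y') :=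
          div_nonneg (hp0 x0 y) (Finset.sum_nonneg fun i _ => hp0 x0 i)
        have h2 : 0 ≤ ∑ x', p x' y := Finset.sum_nonneg (fun i _ => hp0 i y)
        calc |p x0 y / (∑ y', p x0 y') - ∑ x', p x' y|
            = |p x0 y / (∑ y', p x0 y') + -(∑ x', p x' y)| := by ring_nf
        _ ≤ |p x0 y / (∑ y', p x0 y')| + |-(∑ x', p x' y)| := abs_add_le _ _
        _ = p x0 y / (∑ y', p x0 y') + ∑ x', p x' y := by
            rw [abs_of_nonneg h1, abs_neg, abs_of_nonneg h2]
      have hs := Finset.sum_le_sum hb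
      rw [Finset.sum_add_distrib, ← Finset.sum_div, div_self hPx00.ne', hPys] at hs
      linarith
    -- αmin ≤ 1/2
    have hαhalf : αmin ≤ 1/2 := by
      have hx1 : ∃ x1, x1 ≠ x0 ∧ (∑ y, p x1 y) ≠ 0 := by
        by_contra hno
        push_neg at hno
        apply hdne
        have hz : ∀ x', x' ≠ x0 → ∀ y, p x' y = 0 := fun x' hx' y =>
          (Finset.sum_eq_zero_iff_of_nonneg (fun i _ => hp0 x' i)).1 (hno x' hx') y
            (mem_univ y)
        have hPy : ∀ y, (∑ x', p x' y) = p x0 y := by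
          intro y
          rw [Finset.sum_eq_single x0 (fun b _ hb => hz b hb y)
            (fun h => absurd (mem_univ x0) h)]
        have hPx1 : (∑ y, p x0 y) = 1 := by
          rw [← hp1, eq_comm]
          rw [Finset.sum_eq_single x0 (fun b _ hb => hno b hb)
            (fun h => absurd (mem_univ x0) h)]
        rw [hx0d]
        have : ∀ y ∈ Finset.univ,
            |p x0 y / (∑ y', p x0 y') - ∑ x', p x' y| = 0 := by
          intro y _
          rw [hPy y, hPx1, div_one, sub_self, abs_zero]
        rw [Finset.sum_congr rfl this]
        simp
      obtain ⟨x1, hne, hx1⟩ := hx1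
      have ha0' := h_le x0 hx0
      have ha1' := h_le x1 hx1
      have hsub : ({x1, x0} : Finset α) ⊆ Finset.univ := Finset.subset_univ _
      have hsum2 := Finset.sum_le_sum_of_subset_of_nonneg
        (f := fun x => ∑ y, p x y) hsub
        (fun i _ _ => Finset.sum_nonneg fun y _ => hp0 i y)
      rw [Finset.sum_pair hne, hp1] at hsum2
      linarith
    exact aux_final αmin dstar (mutualInfo p) hα0 hαhalf hdpos hd1
      (lemA p hp0 hp1 αmin hα0 h_le)
      (lemB p hp0 hp1 αmin dstar hα0 (by linarith) h_le hd_ub)
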